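/- arXiv:0903.1244 — 2 statements merged into one kernel-verified Lean document; each statement's English description precedes it below -/
import Mathlib

section
/- Let T be an invertible n×n Toeplitz matrix over K, T̃(x) its associated polynomial of degree ≤ 2n−1, and g ∈ K^n with polynomial g(x). A vector u ∈ K^n satisfies T·u = g if and only if there exist v, w ∈ K[x] with deg v ≤ n−1, deg w ≤ n−1 such that T̃(x)·u(x) + x^n·v(x) + (x^{2n}−1)·w(x) = g(x). -/
open Polynomial Finset

/-- The polynomial `T̃(x)` associated to the Toeplitz matrix with entries `t_{i-j}`. -/
noncomputable def Ttilde {K : Type*} [Field K] (n : ℕ) (t : ℤ → K) : Polynomial K :=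
  ∑ i ∈ Finset.range (2 * n),
    C (if i < n then t i else t ((i : ℤ) - 2 * n)) * X ^ i

section Aux

variable {K : Type*} [Field K]

lemma coeff_range_sum (n : ℕ) (c : ℕ → K) (k : ℕ) :
    (∑ i ∈ Finset.range n, C (c i) * X ^ i).coeff k = if k < n then c k else 0 := by
  rw [finset_sum_coeff]
  simp only [coeff_C_mul, coeff_X_pow, mul_ite, mul_one, mul_zero]
  rw [Finset.sum_ite_eq (Finset.range n) k c]
  simp [Finset.mem_range]

lemma Ttilde_coeff (n : ℕ) (t : ℤ → K) (a : ℕ) :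
    (Ttilde n t).coeff a =
      if a < 2 * n then (if a < n then t a else t ((a : ℤ) - 2 * n)) else 0 := by
  unfold Ttilde
  rw [coeff_range_sum]

lemma coeff_fin_sum (n : ℕ) (f : Fin n → K) (k : ℕ) :
    (∑ i : Fin n, C (f i) * X ^ (i : ℕ)).coeff k = if h : k < n then f ⟨k, h⟩ else 0 := by
  rw [finset_sum_coeff]
  simp only [coeff_C_mul, coeff_X_pow, mul_ite, mul_one, mul_zero]
  split
  · next h =>
    rw [Finset.sum_eq_single (⟨k, h⟩ : Fin n)]
    · simp
    · intro i _ hi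
      rw [if_neg]
      intro hk
      exact hi (by ext; simp [← hk])
    · simp
  · next h =>
    refine Finset.sum_eq_zero fun i _ => ?_
    rw [if_neg]
    intro hk
    exact h (hk ▸ i.isLt)

lemma deg_range_sum (n : ℕ) (c : ℕ → K) :
    (∑ i ∈ Finset.range n, C (c i) * X ^ i).degree < (n : WithBot ℕ) := by
  rw [degree_lt_iff_coeff_zero]
  intro m hm
  rw [coeff_range_sum, if_neg (by omega)]

lemma P_coeff (n : ℕ) (t : ℤ → K) (u : Fin n → K) (k : ℕ) :
    (Ttilde n t * ∑ i : Fin n, C (u i) * X ^ (i : ℕ)).coeff k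
      = ∑ i : Fin n, u i * (if (i : ℕ) ≤ k then (Ttilde n t).coeff (k - i) else 0) := by
  rw [Finset.mul_sum, finset_sum_coeff]
  refine Finset.sum_congr rfl fun i _ => ?_
  have h : Ttilde n t * (C (u i) * X ^ (i : ℕ)) = C (u i) * (Ttilde n t * X ^ (i : ℕ)) := by
    ring
  rw [h, coeff_C_mul, coeff_mul_X_pow']

end Aux

/-- For an invertible Toeplitz matrix `T`, `T u = g` iff there exist `v, w` of degree
`≤ n-1` with `T̃(x) u(x) + x^n v(x) + (x^{2n}-1) w(x) = g(x)`. -/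
theorem stmt_5 {K : Type*} [Field K] (n : ℕ) (hn : 0 < n) (t : ℤ → K)
    (T : Matrix (Fin n) (Fin n) K) (hT : T = Matrix.of fun i j : Fin n => t ((i : ℤ) - (j : ℤ)))
    (hTinv : IsUnit T)
    (u g : Fin n → K)
    (up gp : Polynomial K)
    (hup : up = ∑ i : Fin n, C (u i) * X ^ (i : ℕ))
    (hgp : gp = ∑ i : Fin n, C (g i) * X ^ (i : ℕ)) :
    T.mulVec u = g ↔
      ∃ v w : Polynomial K, v.degree < n ∧ w.degree < n ∧
        Ttilde n t * up + X ^ n * v + (X ^ (2 * n) - 1) * w = gp := by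
  subst hT hup hgp
  set P : Polynomial K := Ttilde n t * ∑ i : Fin n, C (u i) * X ^ (i : ℕ) with hP
  have hkey : ∀ i : Fin n,
      P.coeff i + P.coeff ((i : ℕ) + 2 * n)
        = (Matrix.of fun i j : Fin n => t ((i : ℤ) - (j : ℤ))).mulVec u i := by
    intro i
    rw [hP, P_coeff, P_coeff, ← Finset.sum_add_distrib]
    simp only [Matrix.mulVec, dotProduct, Matrix.of_apply]
    refine Finset.sum_congr rfl fun j _ => ?_
    have hj2 : (j : ℕ) ≤ (i : ℕ) + 2 * n := by have := j.isLt; omega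
    rw [Ttilde_coeff, Ttilde_coeff, if_pos hj2]
    by_cases hj : (j : ℕ) ≤ (i : ℕ)
    · rw [if_pos hj]
      have h1 : (i : ℕ) - j < n := lt_of_le_of_lt (Nat.sub_le _ _) i.isLt
      rw [if_pos (by omega : (i : ℕ) - (j : ℕ) < 2 * n), if_pos h1,
        if_neg (by omega : ¬ ((i : ℕ) + 2 * n - (j : ℕ) < 2 * n))]
      have harg : (((i : ℕ) - (j : ℕ) : ℕ) : ℤ) = (i : ℤ) - (j : ℤ) := by
        push_cast [Nat.cast_sub hj]; ring
      rw [mul_zero, add_zero, harg, mul_comm]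
    · rw [if_neg hj, mul_zero, zero_add]
      have := i.isLt; have := j.isLt
      rw [if_pos (by omega : (i : ℕ) + 2 * n - (j : ℕ) < 2 * n),
        if_neg (by omega : ¬ ((i : ℕ) + 2 * n - (j : ℕ) < n))]
      have harg : (((i : ℕ) + 2 * n - (j : ℕ) : ℕ) : ℤ) - 2 * n = (i : ℤ) - (j : ℤ) := by
        have h : (((i : ℕ) + 2 * n - (j : ℕ) : ℕ) : ℤ) = (i : ℤ) + 2 * n - (j : ℤ) := by
          push_cast [Nat.cast_sub (by omega : (j : ℕ) ≤ (i : ℕ) + 2 * n)]; ring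
        rw [h]; ring
      rw [harg, mul_comm]
  have hPz : ∀ k : ℕ, 3 * n ≤ k → P.coeff k = 0 := by
    intro k hk
    rw [hP, P_coeff]
    refine Finset.sum_eq_zero fun i _ => ?_
    have := i.isLt
    rw [if_pos (by omega : (i : ℕ) ≤ k), Ttilde_coeff,
      if_neg (by omega : ¬ (k - (i : ℕ) < 2 * n)), mul_zero]
  constructor
  · intro hu
    refine ⟨∑ j ∈ Finset.range n, C (-(P.coeff (n + j))) * X ^ j,
            ∑ j ∈ Finset.range n, C (-(P.coeff (j + 2 * n))) * X ^ j,
            deg_range_sum n _, deg_range_sum n _, ?_⟩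
    ext k
    rw [mul_comm (X ^ n : Polynomial K), mul_comm ((X ^ (2 * n) - 1 : Polynomial K))]
    rw [sub_eq_add_neg (X ^ (2*n) : Polynomial K), mul_add, mul_neg_one]
    simp only [coeff_add, coeff_neg, coeff_mul_X_pow', coeff_range_sum, coeff_fin_sum]
    rcases lt_or_ge k n with h1 | h1
    · rw [if_neg (by omega : ¬ n ≤ k), if_neg (by omega : ¬ 2 * n ≤ k), if_pos h1, dif_pos h1]
      have := hkey ⟨k, h1⟩
      rw [hu] at this
      simp only [Fin.val_mk] at this ⊢
      linear_combination this
    · rcases lt_or_ge k (2 * n) with h2 | h2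
      · rw [if_pos h1, if_neg (by omega : ¬ 2 * n ≤ k), if_neg (by omega : ¬ k < n),
          dif_neg (by omega : ¬ k < n), if_pos (by omega : k - n < n),
          (by omega : n + (k - n) = k)]
        ring
      · rcases lt_or_ge k (3 * n) with h3 | h3
        · rw [if_pos (by omega : n ≤ k), if_pos h2, if_neg (by omega : ¬ k - n < n),
            if_neg (by omega : ¬ k < n), dif_neg (by omega : ¬ k < n),
            if_pos (by omega : k - 2 * n < n), (by omega : k - 2 * n + 2 * n = k)]
          ring
        · rw [if_pos (by omega : n ≤ k), if_pos (by omega : 2 * n ≤ k),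
            if_neg (by omega : ¬ k - n < n), if_neg (by omega : ¬ k - 2 * n < n),
            if_neg (by omega : ¬ k < n), dif_neg (by omega : ¬ k < n), hPz k h3]
          ring
  · rintro ⟨v, w, hv, hw, heq⟩
    have hvz : ∀ m : ℕ, n ≤ m → v.coeff m = 0 := (degree_lt_iff_coeff_zero v n).mp hv
    have hwz : ∀ m : ℕ, n ≤ m → w.coeff m = 0 := (degree_lt_iff_coeff_zero w n).mp hw
    funext i
    rw [← hkey i]
    rw [mul_comm (X ^ n : Polynomial K), mul_comm ((X ^ (2 * n) - 1 : Polynomial K)),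
      sub_eq_add_neg (X ^ (2*n) : Polynomial K), mul_add, mul_neg_one] at heq
    have h1 := congrArg (fun p : Polynomial K => p.coeff (i : ℕ)) heq
    have h2 := congrArg (fun p : Polynomial K => p.coeff ((i : ℕ) + 2 * n)) heq
    have hi := i.isLt
    simp only [coeff_add, coeff_neg, coeff_mul_X_pow', coeff_fin_sum] at h1 h2
    rw [if_neg (by omega : ¬ n ≤ (i : ℕ)), if_neg (by omega : ¬ 2 * n ≤ (i : ℕ)),
      dif_pos hi] at h1
    rw [if_pos (by omega : n ≤ (i : ℕ) + 2 * n), if_pos (by omega : 2 * n ≤ (i : ℕ) + 2 * n),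
      dif_neg (by omega : ¬ (i : ℕ) + 2 * n < n),
      (show (i : ℕ) + 2 * n - n = (i : ℕ) + n by omega),
      (show (i : ℕ) + 2 * n - 2 * n = (i : ℕ) by omega),
      hvz ((i : ℕ) + n) (by omega), hwz ((i : ℕ) + 2 * n) (by omega)] at h2
    simp only [Fin.eta] at h1
    linear_combination h1 + h2
end

section
/- Let T be an invertible n×n Toeplitz matrix, g(x) the polynomial of a right-hand side g ∈ K^n, and let {(u₁,v₁,w₁), (u₂,v₂,w₂)} be a basis of L(T̃(x), x^n, x^{2n}−1) of degree n. Then the remainder of the division of the vector (0, x^n·g(x), −g(x))ᵀ by the 3×2 matrix with columns (u₁,v₁,w₁)ᵀ and (u₂,v₂,w₂)ᵀ is the unique triple (u,v,w) ∈ K[x]_{n−1}^3 with T̃u + x^n v + (x^{2n}−1)w = g, and its first component u(x) encodes the solution of Tu = g. -/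
open Polynomial Finset

/-- The degree of a vector of polynomials: the maximum of the nat-degrees of its entries. -/
noncomputable def vecDeg {K : Type*} [Field K] (v : Fin 3 → Polynomial K) : ℕ :=
  max (max (v 0).natDegree (v 1).natDegree) (v 2).natDegree

/-!
The columns of the divisor lie in the syzygy module `L(T̃, xⁿ, x²ⁿ - 1)`, so the remainder
`(u, v, w)` of `(0, xⁿ g, -g)` still satisfies `T̃ u + xⁿ v + (x²ⁿ - 1) w = g`. When `u, v, w, g`
have degree `< n`, adding the coefficients of `xⁱ` and `x²ⁿ⁺ⁱ` (`i < n`) of this identity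
eliminates `v` and `w` and leaves exactly the `i`-th row of the Toeplitz system `T u = g`.
Applied to a difference of two solutions this shows, `T` being invertible, that `u` agrees;
then `xⁿ v + (x²ⁿ - 1) w = 0` forces `xⁿ ∣ w`, so `w = v = 0`.
-/

lemma coeff_sum_fin_C_mul_X_pow {R : Type*} [Semiring R] {n : ℕ} (f : Fin n → R) (i : Fin n) :
    (∑ j : Fin n, C (f j) * X ^ (j : ℕ)).coeff i = f i := by
  simp [finsetSum_coeff, Fin.val_inj]

lemma eq_zero_of_X_pow_mul_add_eq_zero {R : Type*} [CommRing R] [IsDomain R] {n : ℕ}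
    {v w : R[X]} (hw : w.degree < n) (h : X ^ n * v + (X ^ (2 * n) - 1) * w = 0) :
    v = 0 ∧ w = 0 := by
  have hw0 : w = 0 := by
    refine eq_zero_of_dvd_of_degree_lt (p := X ^ n) ⟨v + X ^ n * w, by linear_combination -h⟩ ?_
    rwa [degree_X_pow]
  subst hw0
  simpa using h

section Toeplitz

variable {K : Type*} [Field K] {n : ℕ} {t : ℤ → K}

lemma coeff_Ttilde (k : ℕ) :
    (Ttilde n t).coeff k = if k < n then t k else if k < 2 * n then t (k - 2 * n) else 0 := by
  simp only [Ttilde, finsetSum_coeff, coeff_C_mul_X_pow, sum_ite_eq, mem_range]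
  split_ifs <;> first | rfl | omega

/-- Reduced modulo `x²ⁿ - 1`, `T̃ u` has the entries of `T u` as its first `n` coefficients. -/
lemma coeff_Ttilde_mul_add_coeff {u : K[X]} (hu : u.degree < n) {i : ℕ} (hi : i < n) :
    (Ttilde n t * u).coeff i + (Ttilde n t * u).coeff (2 * n + i) =
      ∑ j : Fin n, t (i - j) * u.coeff j := by
  conv_lhs => rw [← (sum_fin (monomial ·) (by simp) hu).trans u.sum_monomial_eq]
  simp only [mul_sum, finsetSum_coeff, ← sum_add_distrib, ← C_mul_X_pow_eq_monomial,
    mul_left_comm _ (C _), coeff_C_mul, ← mul_assoc, coeff_mul_X_pow']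
  refine sum_congr rfl fun j _ => ?_
  have hj := j.isLt
  rw [if_pos (by omega : (j : ℕ) ≤ 2 * n + i), mul_comm (t _)]
  split_ifs with hji
  · rw [coeff_Ttilde, coeff_Ttilde, if_pos (by omega), if_neg (by omega), if_neg (by omega),
      Nat.cast_sub hji, mul_zero, add_zero]
  · rw [coeff_Ttilde, if_neg (by omega), if_pos (by omega), zero_add,
      Nat.cast_sub (by omega : (j : ℕ) ≤ 2 * n + i)]
    push_cast
    ring_nf

lemma toeplitz_mulVec_coeff_eq_of_Ttilde_eq {u v w g : K[X]} (hu : u.degree < n)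
    (hv : v.degree < n) (hw : w.degree < n) (hg : g.degree < n)
    (h : Ttilde n t * u + X ^ n * v + (X ^ (2 * n) - 1) * w = g) :
    (Matrix.of fun i j : Fin n => t ((i : ℤ) - (j : ℤ))).mulVec (fun j : Fin n => u.coeff j) =
      fun i : Fin n => g.coeff i := by
  have coeff_eq_zero {p : K[X]} (hp : p.degree < n) {m : ℕ} (hm : n ≤ m) : p.coeff m = 0 :=
    coeff_eq_zero_of_degree_lt (hp.trans_le (by exact_mod_cast hm))
  funext i
  have hi := i.isLt
  have low := congrArg (coeff · i) h
  have high := congrArg (coeff · (2 * n + i)) h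
  simp only [coeff_add, sub_mul, one_mul, coeff_sub, coeff_X_pow_mul'] at low high
  rw [if_neg (by omega), if_neg (by omega)] at low
  rw [if_pos (by omega), if_pos (by omega), Nat.add_sub_cancel_left,
    coeff_eq_zero hv (m := 2 * n + i - n) (by omega), coeff_eq_zero hw (m := 2 * n + i) (by omega),
    coeff_eq_zero hg (m := 2 * n + i) (by omega)] at high
  simp only [Matrix.mulVec, dotProduct, Matrix.of_apply]
  rw [← coeff_Ttilde_mul_add_coeff hu hi]
  linear_combination low + high

lemma eq_zero_of_syzygy_of_degree_lt
    (hT : IsUnit (Matrix.of fun i j : Fin n => t ((i : ℤ) - (j : ℤ)))) {u v w : K[X]}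
    (hu : u.degree < n) (hv : v.degree < n) (hw : w.degree < n)
    (h : Ttilde n t * u + X ^ n * v + (X ^ (2 * n) - 1) * w = 0) :
    u = 0 ∧ v = 0 ∧ w = 0 := by
  have hTu := toeplitz_mulVec_coeff_eq_of_Ttilde_eq hu hv hw (by simp) h
  simp only [coeff_zero] at hTu
  have hu0 : u = 0 := by
    rw [← degreeLTEquiv_eq_zero_iff_eq_zero (mem_degreeLT.2 hu)]
    exact Matrix.mulVec_injective_iff_isUnit.2 hT (by rw [Matrix.mulVec_zero]; exact hTu)
  subst hu0
  exact ⟨rfl, eq_zero_of_X_pow_mul_add_eq_zero hw (by simpa using h)⟩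

end Toeplitz

theorem stmt_6_general {K : Type*} [Field K] (n : ℕ) (t : ℤ → K)
    (T : Matrix (Fin n) (Fin n) K) (hT : T = Matrix.of fun i j : Fin n => t ((i : ℤ) - (j : ℤ)))
    (hTinv : IsUnit T)
    (gvec : Fin n → K) (g : Polynomial K) (hg : g = ∑ i : Fin n, C (gvec i) * X ^ (i : ℕ))
    (S : Submodule (Polynomial K) (Fin 3 → Polynomial K))
    (hS : ∀ p : Fin 3 → Polynomial K, p ∈ S ↔
      Ttilde n t * p 0 + X ^ n * p 1 + (X ^ (2 * n) - 1) * p 2 = 0)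
    (b : Module.Basis (Fin 2) (Polynomial K) S)
    (c₁ c₂ : Fin 3 → Polynomial K)
    (hc₁ : (b 0 : Fin 3 → Polynomial K) = c₁) (hc₂ : (b 1 : Fin 3 → Polynomial K) = c₂)
    -- the quotient `(p, q)` and the remainder of the division of `(0, x^n g, -g)ᵀ`
    (p q : Polynomial K) (rem : Fin 3 → Polynomial K)
    (hrem : rem = ![0, X ^ n * g, -g] - (p • c₁ + q • c₂))
    (hremdeg : ∀ i, (rem i).degree < n) :
    Ttilde n t * rem 0 + X ^ n * rem 1 + (X ^ (2 * n) - 1) * rem 2 = g ∧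
    (∀ u v w : Polynomial K, u.degree < n → v.degree < n → w.degree < n →
      Ttilde n t * u + X ^ n * v + (X ^ (2 * n) - 1) * w = g →
      u = rem 0 ∧ v = rem 1 ∧ w = rem 2) ∧
    T.mulVec (fun i : Fin n => (rem 0).coeff i) = gvec := by
  subst hT
  have hc₁S := (hS c₁).1 (hc₁ ▸ (b 0).2)
  have hc₂S := (hS c₂).1 (hc₂ ▸ (b 1).2)
  have hrem_sol : Ttilde n t * rem 0 + X ^ n * rem 1 + (X ^ (2 * n) - 1) * rem 2 = g := by
    simp only [hrem, Pi.sub_apply, Pi.add_apply, Pi.smul_apply, smul_eq_mul, Matrix.cons_val]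
    linear_combination (-p) * hc₁S + (-q) * hc₂S
  refine ⟨hrem_sol, fun u v w hu hv hw h => ?_, ?_⟩
  · have degree_sub_lt_of_lt {a b : K[X]} (ha : a.degree < n) (hb : b.degree < n) :
        (a - b).degree < n :=
      (degree_sub_le a b).trans_lt (max_lt ha hb)
    obtain ⟨hu0, hv0, hw0⟩ := eq_zero_of_syzygy_of_degree_lt hTinv
      (degree_sub_lt_of_lt hu (hremdeg 0)) (degree_sub_lt_of_lt hv (hremdeg 1))
      (degree_sub_lt_of_lt hw (hremdeg 2))
      (by linear_combination h - hrem_sol)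
    exact ⟨sub_eq_zero.1 hu0, sub_eq_zero.1 hv0, sub_eq_zero.1 hw0⟩
  · rw [toeplitz_mulVec_coeff_eq_of_Ttilde_eq (hremdeg 0) (hremdeg 1) (hremdeg 2)
      (hg ▸ degree_sum_fin_lt gvec) hrem_sol, hg]
    exact funext (coeff_sum_fin_C_mul_X_pow gvec)

/-- Dividing `(0, x^n g, -g)ᵀ` by the 3×2 matrix whose columns form an `n`-basis of
`L(T̃(x), x^n, x^{2n}-1)` yields, as remainder, the unique triple `(u,v,w)` of degrees
`≤ n-1` with `T̃ u + x^n v + (x^{2n}-1) w = g`; its first component solves `T u = g`. -/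
theorem stmt_6 {K : Type*} [Field K] (n : ℕ) (hn : 0 < n) (t : ℤ → K)
    (T : Matrix (Fin n) (Fin n) K) (hT : T = Matrix.of fun i j : Fin n => t ((i : ℤ) - (j : ℤ)))
    (hTinv : IsUnit T)
    (gvec : Fin n → K) (g : Polynomial K) (hg : g = ∑ i : Fin n, C (gvec i) * X ^ (i : ℕ))
    (S : Submodule (Polynomial K) (Fin 3 → Polynomial K))
    (hS : ∀ p : Fin 3 → Polynomial K, p ∈ S ↔
      Ttilde n t * p 0 + X ^ n * p 1 + (X ^ (2 * n) - 1) * p 2 = 0)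
    (b : Module.Basis (Fin 2) (Polynomial K) S)
    (c₁ c₂ : Fin 3 → Polynomial K)
    (hc₁ : (b 0 : Fin 3 → Polynomial K) = c₁) (hc₂ : (b 1 : Fin 3 → Polynomial K) = c₂)
    (hdeg₁ : vecDeg c₁ = n) (hdeg₂ : vecDeg c₂ = n)
    -- the quotient `(p, q)` and the remainder of the division of `(0, x^n g, -g)ᵀ`
    (p q : Polynomial K) (rem : Fin 3 → Polynomial K)
    (hrem : rem = ![0, X ^ n * g, -g] - (p • c₁ + q • c₂))
    (hremdeg : ∀ i, (rem i).degree < n) :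
    Ttilde n t * rem 0 + X ^ n * rem 1 + (X ^ (2 * n) - 1) * rem 2 = g ∧
    (∀ u v w : Polynomial K, u.degree < n → v.degree < n → w.degree < n →
      Ttilde n t * u + X ^ n * v + (X ^ (2 * n) - 1) * w = g →
      u = rem 0 ∧ v = rem 1 ∧ w = rem 2) ∧
    T.mulVec (fun i : Fin n => (rem 0).coeff i) = gvec :=
  stmt_6_general n t T hT hTinv gvec g hg S hS b c₁ c₂ hc₁ hc₂ p q rem hrem hremdeg
end
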